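/- (Position PEBO, Proposition 3, transient-free form.) Let α > 0, γ > 0, let Ω, v : ℝ → EuclideanSpace ℝ (Fin 3) be continuous, and let z : ℝ → EuclideanSpace ℝ (Fin 3) be differentiable with z(t) ≠ 0 and z'(t) = −Ω(t) ×₃ z(t) − v(t) for all t ≥ 0. Set y(t) := ‖z(t)‖⁻¹ • z(t). Suppose ξ : ℝ → ℝ is differentiable with ξ'(t) = −⟪y(t), v(t)⟫, and x̄, p₂, q : ℝ → EuclideanSpace ℝ (Fin 3) are differentiable and satisfy for all t ≥ 0: x̄'(t) = −α x̄(t) + α² • y(t) with x̄(0) = α • y(0); p₂'(t) = −α p₂(t) + α • (Ω(t) ×₃ y(t)) with p₂(0) = 0; and, with φ(t) := α • y(t) − x̄(t) + p₂(t), q'(t) = −α q(t) + ⟪y(t), v(t)⟫ • φ(t) + α • (v(t) − ⟪y(t), v(t)⟫ • y(t)) with q(0) = 0. Suppose further that ζ, ω, θ̂ : ℝ → ℝ are differentiable and satisfy for all t ≥ 0: ζ'(t) = ⟪φ(t), −q(t) − ξ(t) • φ(t)⟫ − ‖φ(t)‖² ζ(t); ω'(t) = −‖φ(t)‖² ω(t)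 with ω(0) = 1; and θ̂'(t) = γ((ζ(t) − ω(t) ζ(0)) − (1 − ω(t)) θ̂(t)). If there exists t⋆ > 0 with φ(t⋆) ≠ 0, then there exist M > 0 and λ > 0 such that ‖(ξ(t) + θ̂(t)) • y(t) − z(t)‖ ≤ M exp(−λ t) for all t ≥ 0. -/

import Mathlib

/-!
Along the true trajectory the observer states are tied to the unknown range. The radial velocity
of `z` is `-⟪y, v⟫`, so `‖z‖ - ξ` is a constant `θ`; and `q + ‖z‖ • φ` solves `w' = -α w` with
`w 0 = 0`, so it vanishes, which turns `-q - ξ • φ = θ • φ` into a linear regression for `θ`.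
In the same way `ζ - ω ζ(0) = θ (1 - ω)`, hence the error `e = θ̂ - θ` obeys `e' = -γ (1 - ω) e`.
Because `|ω|` is non-increasing and falls strictly below `1` around the instant where `φ ≠ 0`,
this rate is eventually at least `γ (1 - |ω t⋆|) > 0`, and `‖ẑ - z‖ = |e|`.
-/

open scoped RealInnerProductSpace

/-- Cross product on `EuclideanSpace ℝ (Fin 3)`, transported from Mathlib's
`crossProduct` on `Fin 3 → ℝ`. -/
noncomputable def cross3 (a b : EuclideanSpace ℝ (Fin 3)) : EuclideanSpace ℝ (Fin 3) :=
  (WithLp.equiv 2 (Fin 3 → ℝ)).symm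
    (crossProduct ((WithLp.equiv 2 (Fin 3 → ℝ)) a) ((WithLp.equiv 2 (Fin 3 → ℝ)) b))

open Set Real

lemma inner_cross3_self (a b : EuclideanSpace ℝ (Fin 3)) : ⟪b, cross3 a b⟫ = 0 := by
  rw [EuclideanSpace.inner_eq_star_dotProduct, star_trivial]
  simp [cross3, dotProduct_comm, dot_cross_self]

lemma cross3_smul_right (a b : EuclideanSpace ℝ (Fin 3)) (c : ℝ) :
    cross3 a (c • b) = c • cross3 a b := by
  simp [cross3]

theorem Differentiable.hasDerivAt_of_deriv_eq {F : Type*} [NormedAddCommGroup F]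
    [NormedSpace ℝ F] {g : ℝ → F} {g' : ℝ → F} {s : Set ℝ} (hg : Differentiable ℝ g)
    (h : ∀ t ∈ s, _root_.deriv g t = g' t) : ∀ t ∈ s, HasDerivAt g (g' t) t :=
  fun t ht => h t ht ▸ (hg t).hasDerivAt

section LinearODE

variable {E : Type*} [NormedAddCommGroup E] [InnerProductSpace ℝ E] {f : ℝ → E} {b : ℝ → ℝ}

theorem HasDerivAt.norm {x : ℝ} {f' : E} (hf : HasDerivAt f f' x) (h0 : f x ≠ 0) :
    HasDerivAt (‖f ·‖) ⟪‖f x‖⁻¹ • f x, f'⟫ x := by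
  convert hf.norm_sq.sqrt (pow_ne_zero 2 (norm_ne_zero_iff.2 h0)) using 1
  · simp [Real.sqrt_sq (norm_nonneg _)]
  · rw [Real.sqrt_sq (norm_nonneg _), real_inner_smul_left]
    field_simp

theorem norm_le_mul_exp_of_hasDerivAt {t₀ t₁ c : ℝ} (h01 : t₀ ≤ t₁)
    (hf : ∀ t ∈ Icc t₀ t₁, HasDerivAt f (-b t • f t) t) (hb : ∀ t ∈ Ioo t₀ t₁, c ≤ b t) :
    ‖f t₁‖ ≤ ‖f t₀‖ * exp (-c * (t₁ - t₀)) := by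
  set g : ℝ → ℝ := fun t => ‖f t‖ ^ 2 * exp (2 * c * (t - t₀))
  have hg : ∀ t ∈ Icc t₀ t₁, HasDerivAt g (2 * (c - b t) * g t) t := by
    intro t ht
    have hlin : HasDerivAt (fun s => 2 * c * (s - t₀)) (2 * c) t := by
      simpa using ((hasDerivAt_id t).sub_const t₀).const_mul (2 * c)
    refine ((hf t ht).norm_sq.mul hlin.exp).congr_deriv ?_
    simp only [g, real_inner_smul_right, real_inner_self_eq_norm_sq]
    ring
  have hanti : AntitoneOn g (Icc t₀ t₁) := by
    refine antitoneOn_of_deriv_nonpos (convex_Icc t₀ t₁)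
      (fun t ht => (hg t ht).continuousAt.continuousWithinAt)
      (fun t ht => (hg t (interior_subset ht)).differentiableAt.differentiableWithinAt)
      (fun t ht => ?_)
    rw [interior_Icc] at ht
    rw [(hg t (Ioo_subset_Icc_self ht)).deriv]
    have : 0 ≤ g t := by positivity
    nlinarith [hb t ht]
  have hsq : ‖f t₁‖ ^ 2 ≤ (‖f t₀‖ * exp (-c * (t₁ - t₀))) ^ 2 := by
    have key := hanti (left_mem_Icc.2 h01) (right_mem_Icc.2 h01) h01
    simp only [g, sub_self, mul_zero, exp_zero, mul_one] at key
    calc ‖f t₁‖ ^ 2 = ‖f t₁‖ ^ 2 * exp (2 * c * (t₁ - t₀)) * exp (-c * (t₁ - t₀)) ^ 2 := by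
          rw [← exp_nat_mul, mul_assoc, ← exp_add]; ring_nf; simp
      _ ≤ ‖f t₀‖ ^ 2 * exp (-c * (t₁ - t₀)) ^ 2 := by gcongr
      _ = (‖f t₀‖ * exp (-c * (t₁ - t₀))) ^ 2 := by ring
  exact (pow_le_pow_iff_left₀ (norm_nonneg _) (by positivity) two_ne_zero).1 hsq

theorem norm_le_norm_of_hasDerivAt {t₀ t₁ : ℝ} (h01 : t₀ ≤ t₁)
    (hf : ∀ t ∈ Icc t₀ t₁, HasDerivAt f (-b t • f t) t) (hb : ∀ t ∈ Ioo t₀ t₁, 0 ≤ b t) :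
    ‖f t₁‖ ≤ ‖f t₀‖ := by
  simpa using norm_le_mul_exp_of_hasDerivAt h01 hf hb

theorem eq_zero_of_hasDerivAt {t₀ : ℝ} (hf : ∀ t ≥ t₀, HasDerivAt f (-b t • f t) t)
    (hb : ∀ t ≥ t₀, 0 ≤ b t) (h0 : f t₀ = 0) : ∀ t ≥ t₀, f t = 0 := by
  intro t ht
  have := norm_le_norm_of_hasDerivAt ht (fun s hs => hf s hs.1) (fun s hs => hb s hs.1.le)
  rwa [h0, norm_zero, norm_le_zero_iff] at this

theorem norm_lt_norm_of_hasDerivAt {T : ℝ} (hf : ∀ t ≥ 0, HasDerivAt f (-b t • f t) t)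
    (hb : ∀ t ≥ 0, 0 ≤ b t) (h0 : f 0 ≠ 0) (hT : 0 < T) (hbT : 0 < b T)
    (hcont : ContinuousAt b T) : ‖f T‖ < ‖f 0‖ := by
  obtain ⟨l, hlT, hl⟩ := exists_Ioc_subset_of_mem_nhds
    (hcont.eventually (lt_mem_nhds (half_lt_self hbT))) ⟨0, hT⟩
  set t₀ := max l 0
  have ht₀ : t₀ < T := max_lt hlT hT
  calc ‖f T‖ ≤ ‖f t₀‖ * exp (-(b T / 2) * (T - t₀)) :=
        norm_le_mul_exp_of_hasDerivAt ht₀.le (fun t ht => hf t ((le_max_right _ _).trans ht.1))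
          (fun t ht => (hl ⟨(le_max_left _ _).trans_lt ht.1, ht.2.le⟩).le)
    _ ≤ ‖f 0‖ * exp (-(b T / 2) * (T - t₀)) := by
        gcongr
        exact norm_le_norm_of_hasDerivAt (le_max_right _ _) (fun t ht => hf t ht.1)
          (fun t ht => hb t ht.1.le)
    _ < ‖f 0‖ := by
        refine mul_lt_of_lt_one_right (norm_pos_iff.2 h0) (exp_lt_one_iff.2 ?_)
        nlinarith

theorem exists_norm_le_mul_exp_of_hasDerivAt {T lam : ℝ} (hT : 0 ≤ T) (hlam : 0 ≤ lam)
    (hf : ∀ t ≥ 0, HasDerivAt f (-b t • f t) t) (hb : ∀ t ≥ 0, 0 ≤ b t)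
    (hbT : ∀ t ≥ T, lam ≤ b t) : ∃ M > 0, ∀ t ≥ 0, ‖f t‖ ≤ M * exp (-lam * t) := by
  refine ⟨(‖f 0‖ + 1) * exp (lam * T), by positivity, fun t ht => ?_⟩
  have hdecay : ‖f t‖ ≤ ‖f 0‖ * exp (-lam * (t - T)) := by
    have hmono {s₀ s₁ : ℝ} (hs₀ : 0 ≤ s₀) (h01 : s₀ ≤ s₁) : ‖f s₁‖ ≤ ‖f s₀‖ :=
      norm_le_norm_of_hasDerivAt h01 (fun s hs => hf s (hs₀.trans hs.1))
        (fun s hs => hb s (hs₀.trans hs.1.le))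
    rcases le_total t T with htT | hTt
    · calc ‖f t‖ ≤ ‖f 0‖ := hmono le_rfl ht
        _ ≤ ‖f 0‖ * exp (-lam * (t - T)) :=
          le_mul_of_one_le_right (norm_nonneg _) (one_le_exp (by nlinarith))
    · calc ‖f t‖ ≤ ‖f T‖ * exp (-lam * (t - T)) :=
            norm_le_mul_exp_of_hasDerivAt hTt (fun s hs => hf s (hT.trans hs.1))
              (fun s hs => hbT s hs.1.le)
        _ ≤ ‖f 0‖ * exp (-lam * (t - T)) := by gcongr; exact hmono le_rfl hT
  calc ‖f t‖ ≤ ‖f 0‖ * exp (-lam * (t - T)) := hdecay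
    _ ≤ (‖f 0‖ + 1) * exp (-lam * (t - T)) := by gcongr; linarith
    _ = (‖f 0‖ + 1) * exp (lam * T) * exp (-lam * t) := by
        rw [mul_assoc, ← exp_add]; ring_nf

end LinearODE

section Observer

variable {Ω v z : ℝ → EuclideanSpace ℝ (Fin 3)}

theorem HasDerivAt.norm_of_eq_neg_cross3_sub {ω u : EuclideanSpace ℝ (Fin 3)} {t : ℝ}
    (hz : HasDerivAt z (-cross3 ω (z t) - u) t) (h0 : z t ≠ 0) :
    HasDerivAt (‖z ·‖) (-⟪‖z t‖⁻¹ • z t, u⟫) t := by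
  convert hz.norm h0 using 1
  rw [inner_sub_right, inner_neg_right, real_inner_smul_left (z t) (cross3 ω (z t)),
    inner_cross3_self]
  ring

theorem norm_eq_add_of_hasDerivAt {y : ℝ → EuclideanSpace ℝ (Fin 3)} {ξ : ℝ → ℝ}
    (hz : ∀ t ≥ 0, HasDerivAt z (-cross3 (Ω t) (z t) - v t) t) (hz0 : ∀ t ≥ 0, z t ≠ 0)
    (hy : y = fun t => ‖z t‖⁻¹ • z t) (hξ : ∀ t ≥ 0, HasDerivAt ξ (-⟪y t, v t⟫) t) :
    ∀ t ≥ 0, ‖z t‖ = ξ t + (‖z 0‖ - ξ 0) := by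
  subst hy
  have hD : ∀ t ≥ 0, HasDerivAt (fun s => ‖z s‖ - ξ s) 0 t := fun t ht =>
    (((hz t ht).norm_of_eq_neg_cross3_sub (hz0 t ht)).sub (hξ t ht)).congr_deriv (sub_self _)
  intro t ht
  have := constant_of_has_deriv_right_zero
    (fun s hs => (hD s hs.1).continuousAt.continuousWithinAt)
    (fun s hs => (hD s hs.1).hasDerivWithinAt) t ⟨ht, le_rfl⟩
  linarith

theorem add_norm_smul_regressor_eq_zero {α : ℝ} (hα : 0 ≤ α)
    {y xb p₂ φ q : ℝ → EuclideanSpace ℝ (Fin 3)}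
    (hz : ∀ t ≥ 0, HasDerivAt z (-cross3 (Ω t) (z t) - v t) t) (hz0 : ∀ t ≥ 0, z t ≠ 0)
    (hy : y = fun t => ‖z t‖⁻¹ • z t)
    (hxb : ∀ t ≥ 0, HasDerivAt xb ((-α) • xb t + (α ^ 2) • y t) t) (hxb0 : xb 0 = α • y 0)
    (hp₂ : ∀ t ≥ 0, HasDerivAt p₂ ((-α) • p₂ t + α • cross3 (Ω t) (y t)) t) (hp₂0 : p₂ 0 = 0)
    (hφ : φ = fun t => α • y t - xb t + p₂ t)
    (hq : ∀ t ≥ 0, HasDerivAt q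
      ((-α) • q t + ⟪y t, v t⟫ • φ t + α • (v t - ⟪y t, v t⟫ • y t)) t) (hq0 : q 0 = 0) :
    ∀ t ≥ 0, q t + ‖z t‖ • φ t = 0 := by
  subst hy hφ
  beta_reduce at hxb hxb0 hp₂ hq ⊢
  -- `w = q + ‖z‖ • φ` on `t ≥ 0`, written without the bearing so that its derivative is not needed
  set w := fun t => q t + α • z t - ‖z t‖ • (xb t - p₂ t)
  have hw_eq : ∀ t ≥ 0, q t + ‖z t‖ • (α • ‖z t‖⁻¹ • z t - xb t + p₂ t) = w t := by
    intro t ht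
    have := norm_ne_zero_iff.2 (hz0 t ht)
    simp only [w, smul_add, smul_sub, smul_smul, mul_left_comm _ α, mul_inv_cancel₀ this]
    module
  have hw : ∀ t ≥ 0, HasDerivAt w (-α • w t) t := by
    intro t ht
    have hnorm := (hz t ht).norm_of_eq_neg_cross3_sub (hz0 t ht)
    refine (((hq t ht).add ((hz t ht).const_smul α)).sub
      (hnorm.smul ((hxb t ht).sub (hp₂ t ht)))).congr_deriv ?_
    have := norm_ne_zero_iff.2 (hz0 t ht)
    simp only [w, cross3_smul_right, Pi.sub_apply]
    match_scalars <;> field_simp <;> ring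
  intro t ht
  rw [hw_eq t ht]
  refine eq_zero_of_hasDerivAt hw (fun _ _ => hα) ?_ t ht
  rw [← hw_eq 0 le_rfl, hxb0, hp₂0, hq0]
  simp

end Observer

section Estimator

variable {E : Type*} [NormedAddCommGroup E] [InnerProductSpace ℝ E]

theorem exists_abs_sub_le_mul_exp_of_excitation {φ r : ℝ → E} {ζ ω θhat : ℝ → ℝ}
    {θ γ T : ℝ} (hγ : 0 < γ) (hr : ∀ t ≥ 0, r t = θ • φ t)
    (hζ : ∀ t ≥ 0, HasDerivAt ζ (⟪φ t, r t⟫ - ‖φ t‖ ^ 2 * ζ t) t)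
    (hω : ∀ t ≥ 0, HasDerivAt ω (-‖φ t‖ ^ 2 * ω t) t) (hω0 : ω 0 = 1)
    (hθhat : ∀ t ≥ 0, HasDerivAt θhat (γ * ((ζ t - ω t * ζ 0) - (1 - ω t) * θhat t)) t)
    (hT : 0 < T) (hφT : φ T ≠ 0) (hφc : ContinuousAt φ T) :
    ∃ M > 0, ∃ lam > 0, ∀ t ≥ 0, |θhat t - θ| ≤ M * exp (-lam * t) := by
  have ha : ∀ t ≥ (0 : ℝ), 0 ≤ ‖φ t‖ ^ 2 := fun _ _ => sq_nonneg _
  have hζω : ∀ t ≥ 0, ζ t - ω t * ζ 0 = θ * (1 - ω t) := by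
    have hu := eq_zero_of_hasDerivAt (f := fun t => ζ t - θ - (ζ 0 - θ) * ω t) (t₀ := 0)
      (fun t ht => (((hζ t ht).sub_const θ).sub ((hω t ht).const_mul (ζ 0 - θ))).congr_deriv
        (by rw [hr t ht, real_inner_smul_right, real_inner_self_eq_norm_sq, smul_eq_mul]; ring))
      ha (by simp [hω0])
    intro t ht
    linear_combination hu t ht
  have hωmono {s₀ s₁ : ℝ} (hs₀ : 0 ≤ s₀) (h01 : s₀ ≤ s₁) : |ω s₁| ≤ |ω s₀| :=
    norm_le_norm_of_hasDerivAt h01 (fun s hs => hω s (hs₀.trans hs.1))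
      (fun s hs => ha s (hs₀.trans hs.1.le))
  have hω1 : ∀ t ≥ 0, ω t ≤ 1 := fun t ht => by
    simpa [hω0] using (le_abs_self _).trans (hωmono le_rfl ht)
  have hωT : |ω T| < 1 := by
    simpa [hω0] using norm_lt_norm_of_hasDerivAt hω ha (by simp [hω0]) hT
      (by positivity) (hφc.norm.pow 2)
  have he : ∀ t ≥ 0, HasDerivAt (fun t => θhat t - θ) (-(γ * (1 - ω t)) • (θhat t - θ)) t :=
    fun t ht => ((hθhat t ht).sub_const θ).congr_deriv (by rw [hζω t ht, smul_eq_mul]; ring)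
  obtain ⟨M, hM, hbound⟩ := exists_norm_le_mul_exp_of_hasDerivAt (lam := γ * (1 - |ω T|))
    hT.le (by nlinarith [abs_nonneg (ω T)]) he
    (fun t ht => mul_nonneg hγ.le (by linarith [hω1 t ht]))
    (fun t ht => by nlinarith [le_abs_self (ω t), hωmono hT.le ht])
  exact ⟨M, hM, γ * (1 - |ω T|), by nlinarith, fun t ht => by simpa using hbound t ht⟩

end Estimator

theorem stmt11_general (α γ : ℝ) (hα : 0 < α) (hγ : 0 < γ)
    (Ω v : ℝ → EuclideanSpace ℝ (Fin 3))
    (z : ℝ → EuclideanSpace ℝ (Fin 3))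
    (hz : Differentiable ℝ z)
    (hz0 : ∀ t ≥ (0:ℝ), z t ≠ 0)
    (hzd : ∀ t ≥ (0:ℝ), deriv z t = -cross3 (Ω t) (z t) - v t)
    (y : ℝ → EuclideanSpace ℝ (Fin 3)) (hy : y = fun t => ‖z t‖⁻¹ • z t)
    (ξ : ℝ → ℝ) (hξ : Differentiable ℝ ξ)
    (hξd : ∀ t ≥ (0:ℝ), deriv ξ t = -⟪y t, v t⟫)
    (xb p₂ q : ℝ → EuclideanSpace ℝ (Fin 3))
    (hxb : Differentiable ℝ xb)
    (hxbd : ∀ t ≥ (0:ℝ), deriv xb t = (-α) • xb t + (α ^ 2) • y t)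
    (hxb0 : xb 0 = α • y 0)
    (hp₂ : Differentiable ℝ p₂)
    (hp₂d : ∀ t ≥ (0:ℝ), deriv p₂ t = (-α) • p₂ t + α • cross3 (Ω t) (y t))
    (hp₂0 : p₂ 0 = 0)
    (φ : ℝ → EuclideanSpace ℝ (Fin 3)) (hφ : φ = fun t => α • y t - xb t + p₂ t)
    (hq : Differentiable ℝ q)
    (hqd : ∀ t ≥ (0:ℝ), deriv q t =
      (-α) • q t + ⟪y t, v t⟫ • φ t + α • (v t - ⟪y t, v t⟫ • y t))
    (hq0 : q 0 = 0)
    (ζ ω θhat : ℝ → ℝ)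
    (hζ : Differentiable ℝ ζ)
    (hζd : ∀ t ≥ (0:ℝ), deriv ζ t = ⟪φ t, -q t - ξ t • φ t⟫ - ‖φ t‖ ^ 2 * ζ t)
    (hω : Differentiable ℝ ω)
    (hωd : ∀ t ≥ (0:ℝ), deriv ω t = -‖φ t‖ ^ 2 * ω t)
    (hω0 : ω 0 = 1)
    (hθhat : Differentiable ℝ θhat)
    (hθhatd : ∀ t ≥ (0:ℝ),
      deriv θhat t = γ * ((ζ t - ω t * ζ 0) - (1 - ω t) * θhat t))
    (hIE : ∃ tstar > (0:ℝ), φ tstar ≠ 0) :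
    ∃ M > (0:ℝ), ∃ lam > (0:ℝ),
      ∀ t ≥ (0:ℝ), ‖(ξ t + θhat t) • y t - z t‖ ≤ M * Real.exp (-lam * t) := by
  obtain ⟨T, hT, hφT⟩ := hIE
  have hzD := hz.hasDerivAt_of_deriv_eq hzd
  obtain ⟨θ, hθ⟩ : ∃ θ, ∀ t ≥ 0, ‖z t‖ = ξ t + θ :=
    ⟨_, norm_eq_add_of_hasDerivAt hzD hz0 hy (hξ.hasDerivAt_of_deriv_eq hξd)⟩
  have hr : ∀ t ≥ 0, -q t - ξ t • φ t = θ • φ t := fun t ht => by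
    have h := add_norm_smul_regressor_eq_zero hα.le hzD hz0 hy
      (hxb.hasDerivAt_of_deriv_eq hxbd) hxb0 (hp₂.hasDerivAt_of_deriv_eq hp₂d) hp₂0 hφ
      (hq.hasDerivAt_of_deriv_eq hqd) hq0 t ht
    rw [hθ t ht] at h
    linear_combination (norm := module) -h
  have hyT : ContinuousAt y T := hy ▸ (hz.continuous.continuousAt.norm.inv₀
    (norm_ne_zero_iff.2 (hz0 T hT.le))).smul hz.continuous.continuousAt
  obtain ⟨M, hM, lam, hlam, hbound⟩ := exists_abs_sub_le_mul_exp_of_excitation hγ hr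
    (hζ.hasDerivAt_of_deriv_eq hζd) (hω.hasDerivAt_of_deriv_eq hωd) hω0
    (hθhat.hasDerivAt_of_deriv_eq hθhatd) hT hφT
    (hφ ▸ ((hyT.const_smul α).sub hxb.continuous.continuousAt).add hp₂.continuous.continuousAt)
  refine ⟨M, hM, lam, hlam, fun t ht => ?_⟩
  have hzt : ‖z t‖ ≠ 0 := norm_ne_zero_iff.2 (hz0 t ht)
  have hzy : z t = ‖z t‖ • y t := by rw [hy]; exact (smul_inv_smul₀ hzt _).symm
  have hy1 : ‖y t‖ = 1 := by rw [hy]; simp [norm_smul, hzt]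
  calc ‖(ξ t + θhat t) • y t - z t‖ = ‖(θhat t - θ) • y t‖ := by
        rw [hzy, hθ t ht]; congr 1; module
    _ = |θhat t - θ| := by rw [norm_smul, hy1, mul_one, Real.norm_eq_abs]
    _ ≤ M * Real.exp (-lam * t) := hbound t ht

/-- Position PEBO (Proposition 3, transient-free form): under interval
excitation of the regressor `φ`, the estimate `ẑ = (ξ + θ̂) • y` converges to
`z` globally exponentially. -/
theorem stmt11 (α γ : ℝ) (hα : 0 < α) (hγ : 0 < γ)
    (Ω v : ℝ → EuclideanSpace ℝ (Fin 3)) (hΩ : Continuous Ω) (hv : Continuous v)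
    (z : ℝ → EuclideanSpace ℝ (Fin 3))
    (hz : Differentiable ℝ z)
    (hz0 : ∀ t ≥ (0:ℝ), z t ≠ 0)
    (hzd : ∀ t ≥ (0:ℝ), deriv z t = -cross3 (Ω t) (z t) - v t)
    (y : ℝ → EuclideanSpace ℝ (Fin 3)) (hy : y = fun t => ‖z t‖⁻¹ • z t)
    (ξ : ℝ → ℝ) (hξ : Differentiable ℝ ξ)
    (hξd : ∀ t ≥ (0:ℝ), deriv ξ t = -⟪y t, v t⟫)
    (xb p₂ q : ℝ → EuclideanSpace ℝ (Fin 3))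
    (hxb : Differentiable ℝ xb)
    (hxbd : ∀ t ≥ (0:ℝ), deriv xb t = (-α) • xb t + (α ^ 2) • y t)
    (hxb0 : xb 0 = α • y 0)
    (hp₂ : Differentiable ℝ p₂)
    (hp₂d : ∀ t ≥ (0:ℝ), deriv p₂ t = (-α) • p₂ t + α • cross3 (Ω t) (y t))
    (hp₂0 : p₂ 0 = 0)
    (φ : ℝ → EuclideanSpace ℝ (Fin 3)) (hφ : φ = fun t => α • y t - xb t + p₂ t)
    (hq : Differentiable ℝ q)
    (hqd : ∀ t ≥ (0:ℝ), deriv q t =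
      (-α) • q t + ⟪y t, v t⟫ • φ t + α • (v t - ⟪y t, v t⟫ • y t))
    (hq0 : q 0 = 0)
    (ζ ω θhat : ℝ → ℝ)
    (hζ : Differentiable ℝ ζ)
    (hζd : ∀ t ≥ (0:ℝ), deriv ζ t = ⟪φ t, -q t - ξ t • φ t⟫ - ‖φ t‖ ^ 2 * ζ t)
    (hω : Differentiable ℝ ω)
    (hωd : ∀ t ≥ (0:ℝ), deriv ω t = -‖φ t‖ ^ 2 * ω t)
    (hω0 : ω 0 = 1)
    (hθhat : Differentiable ℝ θhat)
    (hθhatd : ∀ t ≥ (0:ℝ),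
      deriv θhat t = γ * ((ζ t - ω t * ζ 0) - (1 - ω t) * θhat t))
    (hIE : ∃ tstar > (0:ℝ), φ tstar ≠ 0) :
    ∃ M > (0:ℝ), ∃ lam > (0:ℝ),
      ∀ t ≥ (0:ℝ), ‖(ξ t + θhat t) • y t - z t‖ ≤ M * Real.exp (-lam * t) :=
  stmt11_general α γ hα hγ Ω v z hz hz0 hzd y hy ξ hξ hξd xb p₂ q hxb hxbd hxb0 hp₂ hp₂d hp₂0 φ hφ
    hq hqd hq0 ζ ω θhat hζ hζd hω hωd hω0 hθhat hθhatd hIE
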